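/- Let σ ∈ S^m_{ρ,δ,N,N'} with 0 < ρ ≤ 1, 0 ≤ δ < 1, let α, β be multi-indices with |α| ≤ N, and set a = d+m+δ|α|+|β|. For every M ∈ ℕ₀ with M ≤ N' and ρM > a there is a constant C_{α,β,M} such that for all x ∈ ℝ^d and all z with 0 < |z| ≤ 1: Σ over those j ≥ 0 with 2^j > |z|^{−1} of |K_{j,α,β}(x,z)| is at most C_{α,β,M} · |z|^{−a−(1−ρ)M}. -/

import Mathlib

open MeasureTheory Real Complex Filter Set

noncomputable section

/-- `ℝ^d` with the Euclidean norm. -/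
abbrev Ed (d : ℕ) := EuclideanSpace ℝ (Fin d)

namespace PaperPDO

/-- The length `|α| = α₁ + ⋯ + α_d` of a multi-index. -/
def msize {d : ℕ} (α : Fin d → ℕ) : ℕ := ∑ i, α i

/-- The Japanese bracket `⟨ξ⟩ = (1 + |ξ|²)^{1/2}`. -/
def jb {d : ℕ} (ξ : Ed d) : ℝ := Real.sqrt (1 + ‖ξ‖ ^ 2)

/-- The max norm `|x|_∞` on `ℝ^d`. -/
def maxNorm {d : ℕ} (x : Ed d) : ℝ := ‖(fun i => x i : Fin d → ℝ)‖

/-- The ℓ¹-norm `|x|₁` on `ℝ^d`. -/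
def l1Norm {d : ℕ} (x : Ed d) : ℝ := ∑ i, |x i|

/-- The monomial `x^α = x₁^{α₁} ⋯ x_d^{α_d}` (as a complex number). -/
def monom {d : ℕ} (α : Fin d → ℕ) (x : Ed d) : ℂ := ∏ i, (x i : ℂ) ^ (α i)

/-- First-order partial derivative `∂_i f` via the Fréchet derivative. -/
def pd {d : ℕ} (i : Fin d) (f : Ed d → ℂ) : Ed d → ℂ :=
  fun x => fderiv ℝ f x (EuclideanSpace.single i (1 : ℝ))

/-- `n`-fold partial derivative `∂_i^n f`. -/
def pdPow {d : ℕ} (i : Fin d) : ℕ → (Ed d → ℂ) → (Ed d → ℂ)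
  | 0, f => f
  | n + 1, f => pd i (pdPow i n f)

/-- Iterated partial derivative `∂^γ f` along a multi-index `γ`. -/
def mpd {d : ℕ} (γ : Fin d → ℕ) (f : Ed d → ℂ) : Ed d → ℂ :=
  (List.finRange d).foldr (fun i g => pdPow i (γ i) g) f

/-- The nonsmooth Hörmander symbol class `S^m_{ρ,δ,N,N'}`:  all partial derivatives
`D α β = ∂_x^α ∂_ξ^β σ` with `|α| ≤ N`, `|β| ≤ N'` exist, are continuous, and satisfy
`|∂_x^α ∂_ξ^β σ(x,ξ)| ≤ C_{α,β} ⟨ξ⟩^{m - ρ|β| + δ|α|}`. -/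
structure SymbolClass (d : ℕ) (m ρ δ : ℝ) (N N' : ℕ) (σ : Ed d → Ed d → ℂ) where
  /-- the family of partial derivatives `∂_x^α ∂_ξ^β σ` -/
  D : (Fin d → ℕ) → (Fin d → ℕ) → Ed d → Ed d → ℂ
  D_zero : D 0 0 = σ
  hasDeriv_x : ∀ (α β : Fin d → ℕ) (i : Fin d), msize α < N → msize β ≤ N' →
    ∀ (x ξ : Ed d),
      HasDerivAt (fun t : ℝ => D α β (x + t • EuclideanSpace.single i (1 : ℝ)) ξ)
        (D (α + Pi.single i 1) β x ξ) 0
  hasDeriv_ξ : ∀ (α β : Fin d → ℕ) (i : Fin d), msize α ≤ N → msize β < N' →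
    ∀ (x ξ : Ed d),
      HasDerivAt (fun t : ℝ => D α β x (ξ + t • EuclideanSpace.single i (1 : ℝ)))
        (D α (β + Pi.single i 1) x ξ) 0
  continuous : ∀ (α β : Fin d → ℕ), msize α ≤ N → msize β ≤ N' →
    Continuous (fun p : Ed d × Ed d => D α β p.1 p.2)
  bound : ∀ (α β : Fin d → ℕ), msize α ≤ N → msize β ≤ N' →
    ∃ C : ℝ, ∀ (x ξ : Ed d),
      ‖D α β x ξ‖ ≤ C * jb ξ ^ (m - ρ * (msize β : ℝ) + δ * (msize α : ℝ))

/-- A bump function `η` suitable for the dyadic decomposition:  `η ∈ C_c^∞(ℝ^d)`,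
`0 ≤ η ≤ 1`, `η = 1` on `|ξ| ≤ 1` and `η = 0` on `|ξ| ≥ 2`. -/
structure IsDyadicCutoff (d : ℕ) (η : Ed d → ℝ) : Prop where
  smooth : ContDiff ℝ (⊤ : ℕ∞) η
  compactSupport : HasCompactSupport η
  nonneg : ∀ ξ, 0 ≤ η ξ
  le_one : ∀ ξ, η ξ ≤ 1
  eq_one : ∀ ξ : Ed d, ‖ξ‖ ≤ 1 → η ξ = 1
  eq_zero : ∀ ξ : Ed d, 2 ≤ ‖ξ‖ → η ξ = 0

/-- The dyadic cutoffs: `cutoff η 0 ξ = η(ξ)` and, for `j ≥ 1`,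
`cutoff η j ξ = ζ(2^{-j} ξ)` where `ζ(ξ) = η(ξ) - η(2ξ)`. -/
def cutoff {d : ℕ} (η : Ed d → ℝ) (j : ℕ) (ξ : Ed d) : ℝ :=
  if j = 0 then η ξ
  else η (((2 : ℝ) ^ (-(j : ℤ))) • ξ) - η (((2 : ℝ) ^ (-(j : ℤ) + 1)) • ξ)

/-- `K_{j,α,β}(x,z) = (2π)^{-d} ∫ (iξ)^β ∂_x^α σ_j(x,ξ) e^{iξ·z} dξ`, where
`σ_j(x,ξ) = σ(x,ξ) · cutoff η j ξ` and `D α 0 = ∂_x^α σ`. -/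
def Kj {d : ℕ} (D : (Fin d → ℕ) → (Fin d → ℕ) → Ed d → Ed d → ℂ) (η : Ed d → ℝ)
    (j : ℕ) (α β : Fin d → ℕ) (x z : Ed d) : ℂ :=
  ((2 * Real.pi) ^ (-(d : ℤ))) •
    ∫ ξ : Ed d, (∏ i, (Complex.I * (ξ i : ℂ)) ^ (β i)) * D α 0 x ξ *
      (cutoff η j ξ : ℂ) * Complex.exp (Complex.I * ((inner ℝ ξ z : ℝ) : ℂ))

/-- The Fourier transform `f̂(ξ) = ∫ e^{-i y·ξ} f(y) dy` (paper's convention). -/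
def FT {d : ℕ} (f : Ed d → ℂ) (ξ : Ed d) : ℂ :=
  ∫ y : Ed d, Complex.exp (-(Complex.I) * ((inner ℝ y ξ : ℝ) : ℂ)) * f y

end PaperPDO

open PaperPDO

namespace S4
open Finset MeasureTheory

variable {d : ℕ}

lemma msize_single (k : Fin d) (q : ℕ) : msize (Pi.single k q) = q := by
  classical
  simp [msize, Pi.single_apply]

lemma single_add_single (k : Fin d) (q : ℕ) :
    (Pi.single k q + Pi.single k 1 : Fin d → ℕ) = Pi.single k (q + 1) := by
  classical
  ext i
  by_cases h : i = k <;> simp [h, Pi.single_apply]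

/-- coordinate bound on Euclidean space -/
lemma coord_le_norm (ξ : Ed d) (i : Fin d) : |ξ i| ≤ ‖ξ‖ := by
  rw [EuclideanSpace.norm_eq]
  rw [← Real.sqrt_sq_eq_abs]
  apply Real.sqrt_le_sqrt
  simp only [Real.norm_eq_abs]
  have := Finset.single_le_sum (f := fun i => |ξ i| ^ 2) (fun j _ => sq_nonneg _) (Finset.mem_univ i)
  simpa [sq_abs] using this

def eK (k : Fin d) : Ed d := EuclideanSpace.single k (1 : ℝ)

lemma norm_eK (k : Fin d) : ‖eK k‖ = 1 := by
  simp [eK, EuclideanSpace.norm_single]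

def zeta (η : Ed d → ℝ) (ξ : Ed d) : ℝ := η ξ - η ((2 : ℝ) • ξ)

def cj (j : ℕ) : ℝ := (2 : ℝ) ^ (-(j : ℤ))

lemma cj_pos (j : ℕ) : 0 < cj j := zpow_pos two_pos _

def chiD (η : Ed d → ℝ) (k : Fin d) (j r : ℕ) (ξ : Ed d) : ℝ :=
  (cj j) ^ r * iteratedFDeriv ℝ r (zeta η) (cj j • ξ) (fun _ => eK k)

def monomD (β : Fin d → ℕ) (k : Fin d) (p : ℕ) (ξ : Ed d) : ℂ :=
  ((β k).descFactorial p : ℂ) * Complex.I ^ p * (Complex.I * ((ξ k : ℝ) : ℂ)) ^ (β k - p) *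
    ∏ i ∈ Finset.univ.erase k, (Complex.I * ((ξ i : ℝ) : ℂ)) ^ (β i)

def Efun (z ξ : Ed d) : ℂ := Complex.exp (Complex.I * ((inner ℝ ξ z : ℝ) : ℂ))

def term (D : (Fin d → ℕ) → (Fin d → ℕ) → Ed d → Ed d → ℂ) (η : Ed d → ℝ)
    (α β : Fin d → ℕ) (k : Fin d) (x : Ed d) (j p q r : ℕ) (ξ : Ed d) : ℂ :=
  monomD β k p ξ * D α (Pi.single k q) x ξ * ((chiD η k j r ξ : ℝ) : ℂ)

lemma norm_Efun (z ξ : Ed d) : ‖Efun z ξ‖ = 1 := by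
  rw [Efun, Complex.norm_exp]
  simp

end S4
namespace S4
open Finset MeasureTheory Metric

variable {d : ℕ}

lemma zeta_smooth {η : Ed d → ℝ} (hη : IsDyadicCutoff d η) : ContDiff ℝ (⊤ : ℕ∞) (zeta η) := by
  apply hη.smooth.sub
  exact hη.smooth.comp (contDiff_const_smul (2 : ℝ))

lemma zeta_eq_zero {η : Ed d → ℝ} (hη : IsDyadicCutoff d η) {u : Ed d}
    (h : ¬((1:ℝ)/2 ≤ ‖u‖ ∧ ‖u‖ ≤ 2)) : zeta η u = 0 := by
  rw [zeta]
  rcases not_and_or.1 h with h1 | h2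
  · push_neg at h1
    have hu : ‖u‖ ≤ 1 := by linarith
    have h2u : ‖(2:ℝ) • u‖ ≤ 1 := by
      rw [norm_smul]; simp only [Real.norm_ofNat]; linarith
    rw [hη.eq_one u hu, hη.eq_one _ h2u, sub_self]
  · push_neg at h2
    have hu : (2:ℝ) ≤ ‖u‖ := le_of_lt h2
    have h2u : (2:ℝ) ≤ ‖(2:ℝ) • u‖ := by
      rw [norm_smul]; simp only [Real.norm_ofNat]; nlinarith
    rw [hη.eq_zero u hu, hη.eq_zero _ h2u, sub_self]

lemma tsupport_zeta_subset {η : Ed d → ℝ} (hη : IsDyadicCutoff d η) :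
    tsupport (zeta η) ⊆ {u : Ed d | (1:ℝ)/2 ≤ ‖u‖ ∧ ‖u‖ ≤ 2} := by
  apply closure_minimal
  · intro u hu
    by_contra h
    exact hu (zeta_eq_zero hη h)
  · exact (isClosed_le continuous_const continuous_norm).inter
      (isClosed_le continuous_norm continuous_const)

lemma zeta_compactSupport {η : Ed d → ℝ} (hη : IsDyadicCutoff d η) :
    HasCompactSupport (zeta η) := by
  apply HasCompactSupport.intro (isCompact_closedBall (0 : Ed d) 2)
  intro u hu
  apply zeta_eq_zero hη
  rw [mem_closedBall, dist_zero_right] at hu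
  push_neg at hu
  intro hc
  exact absurd hc.2 (not_le.2 hu)

/-- If `chiD η k j r ξ ≠ 0` then `ξ` is in the dyadic annulus. -/
lemma chiD_support {η : Ed d → ℝ} (hη : IsDyadicCutoff d η) {k : Fin d} {j r : ℕ} {ξ : Ed d}
    (h : chiD η k j r ξ ≠ 0) :
    (2:ℝ) ^ ((j:ℤ) - 1) ≤ ‖ξ‖ ∧ ‖ξ‖ ≤ (2:ℝ) ^ ((j:ℤ) + 1) := by
  have hne : iteratedFDeriv ℝ r (zeta η) (cj j • ξ) ≠ 0 := by
    intro h0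
    apply h
    rw [chiD, h0]
    simp
  have hmem : cj j • ξ ∈ tsupport (iteratedFDeriv ℝ r (zeta η)) :=
    subset_closure (by simpa [Function.mem_support] using hne)
  have hmem2 := (tsupport_zeta_subset hη) ((tsupport_iteratedFDeriv_subset r) hmem)
  obtain ⟨h1, h2⟩ := hmem2
  rw [norm_smul, Real.norm_eq_abs, abs_of_pos (cj_pos j), cj] at h1 h2
  have hP : (0:ℝ) < (2:ℝ) ^ (j:ℤ) := zpow_pos two_pos _
  have hnorm : ‖ξ‖ = (2:ℝ) ^ (j:ℤ) * ((2:ℝ) ^ (-(j:ℤ)) * ‖ξ‖) := by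
    rw [← mul_assoc, ← zpow_add₀ (two_ne_zero (α := ℝ))]
    simp
  have e1 : (2:ℝ) ^ ((j:ℤ) - 1) = (2:ℝ) ^ (j:ℤ) / 2 := by
    rw [zpow_sub₀ (two_ne_zero (α := ℝ)), zpow_one]
  have e2 : (2:ℝ) ^ ((j:ℤ) + 1) = 2 * (2:ℝ) ^ (j:ℤ) := by
    rw [zpow_add₀ (two_ne_zero (α := ℝ)), zpow_one]; ring
  constructor
  · rw [e1]; nlinarith [hP, h1, hnorm]
  · rw [e2]; nlinarith [hP, h2, hnorm]

end S4
namespace S4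
open Finset MeasureTheory Metric

variable {d : ℕ}

/-- Uniform bound for `chiD`. -/
lemma chiD_bound {η : Ed d → ℝ} (hη : IsDyadicCutoff d η) (k : Fin d) (r : ℕ) :
    ∃ B : ℝ, 0 ≤ B ∧ ∀ (j : ℕ) (ξ : Ed d), |chiD η k j r ξ| ≤ B * ((2:ℝ) ^ (-(j:ℤ))) ^ r := by
  obtain ⟨B, hB⟩ := ((zeta_smooth hη).continuous_iteratedFDeriv (m := r)
    (by exact_mod_cast le_top)).bounded_above_of_compact_support ((zeta_compactSupport hη).iteratedFDeriv r)
  refine ⟨max B 0, le_max_right _ _, fun j ξ => ?_⟩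
  rw [chiD, abs_mul, _root_.abs_of_nonneg (pow_nonneg (cj_pos j).le r), mul_comm]
  apply mul_le_mul_of_nonneg_right _ (pow_nonneg (cj_pos j).le r)
  calc |iteratedFDeriv ℝ r (zeta η) (cj j • ξ) fun _ => eK k|
      ≤ ‖iteratedFDeriv ℝ r (zeta η) (cj j • ξ)‖ * ∏ _i : Fin r, ‖eK k‖ :=
        (iteratedFDeriv ℝ r (zeta η) (cj j • ξ)).le_opNorm _
    _ ≤ max B 0 := by
        simp only [norm_eK, Finset.prod_const_one, mul_one]
        exact le_max_of_le_left (hB _)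

/-- Line derivative of `chiD` in direction `eK k`. -/
lemma chiD_hasDerivAt {η : Ed d → ℝ} (hη : IsDyadicCutoff d η) (k : Fin d) (j r : ℕ) (ξ : Ed d) :
    HasDerivAt (fun t : ℝ => chiD η k j r (ξ + t • eK k)) (chiD η k j (r + 1) ξ) 0 := by
  classical
  set c := cj j with hc
  set w := eK k with hw
  set G := iteratedFDeriv ℝ r (zeta η) with hG
  have hdiff : Differentiable ℝ G :=
    (zeta_smooth hη).differentiable_iteratedFDeriv (by exact_mod_cast ENat.coe_lt_top r)
  set u₀ : Ed d := c • ξ with hu₀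
  have hGd : HasFDerivAt G (fderiv ℝ G u₀) u₀ := (hdiff u₀).hasFDerivAt
  -- the line
  have hline : HasDerivAt (fun t : ℝ => u₀ + t • (c • w)) (c • w) 0 := by
    simpa using ((hasDerivAt_id (0:ℝ)).smul_const (c • w)).const_add u₀
  have hGd' : HasFDerivAt G (fderiv ℝ G u₀) (u₀ + (0:ℝ) • (c • w)) := by simpa using hGd
  have hcomp : HasDerivAt (fun t : ℝ => G (u₀ + t • (c • w))) (fderiv ℝ G u₀ (c • w)) 0 :=
    hGd'.comp_hasDerivAt 0 hline
  set A : ContinuousMultilinearMap ℝ (fun _ : Fin r => Ed d) ℝ →L[ℝ] ℝ :=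
    ContinuousMultilinearMap.apply ℝ (fun _ : Fin r => Ed d) ℝ (fun _ => w) with hA
  have hcomp2 : HasDerivAt (fun t : ℝ => A (G (u₀ + t • (c • w))))
      (A (fderiv ℝ G u₀ (c • w))) 0 := A.hasFDerivAt.comp_hasDerivAt 0 hcomp
  have hmain : HasDerivAt (fun t : ℝ => c ^ r * A (G (u₀ + t • (c • w))))
      (c ^ r * A (fderiv ℝ G u₀ (c • w))) 0 := hcomp2.const_mul _
  have hfun : (fun t : ℝ => chiD η k j r (ξ + t • w)) =
      (fun t : ℝ => c ^ r * A (G (u₀ + t • (c • w)))) := by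
    funext t
    rw [chiD]
    congr 2
    rw [hu₀, smul_add, smul_comm]
  rw [hfun]
  convert hmain using 1
  rw [chiD, pow_succ]
  have happ : iteratedFDeriv ℝ (r+1) (zeta η) u₀ (fun _ => w) =
      fderiv ℝ G u₀ w (fun _ => w) := by
    rw [hG]
    have := iteratedFDeriv_succ_apply_left (𝕜 := ℝ) (f := zeta η) (x := u₀)
      (n := r) (m := fun _ : Fin (r+1) => w)
    exact this
  rw [happ]
  have : (fderiv ℝ G u₀) (c • w) = c • (fderiv ℝ G u₀ w) := by
    exact (fderiv ℝ G u₀).map_smul c w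
  rw [this]
  have hAc : A (c • (fderiv ℝ G u₀ w)) = c * A (fderiv ℝ G u₀ w) := by
    rw [A.map_smul, smul_eq_mul]
  rw [hAc, hA]
  simp only [ContinuousMultilinearMap.apply_apply]
  ring

end S4
namespace S4
open Finset MeasureTheory Metric

variable {d : ℕ}

lemma apply_add_smul_eK (ξ : Ed d) (t : ℝ) (k i : Fin d) :
    (ξ + t • eK k) i = ξ i + t * (if i = k then 1 else 0) := by
  rw [PiLp.add_apply, PiLp.smul_apply, eK, EuclideanSpace.single_apply]
  simp

lemma monomD_hasDerivAt (β : Fin d → ℕ) (k : Fin d) (p : ℕ) (ξ : Ed d) :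
    HasDerivAt (fun t : ℝ => monomD β k p (ξ + t • eK k)) (monomD β k (p + 1) ξ) 0 := by
  classical
  set n := β k - p with hn
  have hfun : (fun t : ℝ => monomD β k p (ξ + t • eK k)) =
      (fun t : ℝ => ((β k).descFactorial p : ℂ) * Complex.I ^ p *
        (Complex.I * ((ξ k : ℝ) : ℂ) + Complex.I * (t : ℂ)) ^ n *
        ∏ i ∈ Finset.univ.erase k, (Complex.I * ((ξ i : ℝ) : ℂ)) ^ (β i)) := by
    funext t
    rw [monomD]
    congr 1
    · congr 1
      rw [apply_add_smul_eK]
      simp only [if_pos rfl, mul_one]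
      push_cast
      ring
    · apply Finset.prod_congr rfl
      intro i hi
      rw [apply_add_smul_eK]
      rw [if_neg (Finset.mem_erase.1 hi).1]
      simp
  rw [hfun]
  have hbaseC : HasDerivAt (fun w : ℂ => Complex.I * ((ξ k : ℝ) : ℂ) + Complex.I * w)
      Complex.I ((0:ℝ) : ℂ) := by
    simpa using ((hasDerivAt_id (((0:ℝ):ℂ))).const_mul Complex.I).const_add
      (Complex.I * ((ξ k : ℝ) : ℂ))
  have hpow := (hbaseC.pow n).comp_ofReal
  have hmul := (hpow.const_mul (((β k).descFactorial p : ℂ) * Complex.I ^ p)).mul_const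
    (∏ i ∈ Finset.univ.erase k, (Complex.I * ((ξ i : ℝ) : ℂ)) ^ (β i))
  convert hmul using 1
  · rfl
  · rfl
  rw [monomD]
  have hdesc : ((β k).descFactorial (p + 1) : ℂ) = (n : ℂ) * ((β k).descFactorial p : ℂ) := by
    rw [Nat.descFactorial_succ]
    push_cast
    ring
  have hexp : β k - (p + 1) = n - 1 := by omega
  rw [hdesc, hexp]
  simp only [mul_zero, add_zero, Complex.ofReal_zero]
  ring

lemma Efun_hasDerivAt (z ξ : Ed d) (k : Fin d) :
    HasDerivAt (fun t : ℝ => Efun z (ξ + t • eK k))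
      (Complex.I * ((z k : ℝ) : ℂ) * Efun z ξ) 0 := by
  have hinner : ∀ t : ℝ, (inner ℝ (ξ + t • eK k) z : ℝ) = (inner ℝ ξ z : ℝ) + t * z k := by
    intro t
    rw [inner_add_left, real_inner_smul_left]
    congr 2
    rw [eK]
    have := EuclideanSpace.inner_single_left (𝕜 := ℝ) k (1:ℝ) z
    simpa using this
  have hfun : (fun t : ℝ => Efun z (ξ + t • eK k)) =
      (fun t : ℝ => Complex.exp (Complex.I * ((inner ℝ ξ z : ℝ) : ℂ) +
        (Complex.I * ((z k : ℝ) : ℂ)) * (t : ℂ))) := by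
    funext t
    rw [Efun, hinner t]
    push_cast
    ring_nf
  rw [hfun]
  have h1 : HasDerivAt (fun t : ℝ => (t : ℂ)) 1 0 := by
    simpa using (hasDerivAt_id (0:ℝ)).ofReal_comp
  have h2 := ((h1.const_mul (Complex.I * ((z k : ℝ) : ℂ))).const_add
    (Complex.I * ((inner ℝ ξ z : ℝ) : ℂ))).cexp
  convert h2 using 1
  rw [Efun]
  simp
  ring

end S4
namespace S4
open Finset MeasureTheory Metric

variable {d : ℕ}

lemma continuous_coord (i : Fin d) : Continuous fun ξ : Ed d => ξ i := by
  exact (EuclideanSpace.proj i).continuous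

lemma continuous_monomD (β : Fin d → ℕ) (k : Fin d) (p : ℕ) :
    Continuous (monomD β k p) := by
  apply Continuous.mul
  · apply Continuous.mul
    · exact continuous_const
    · exact (continuous_const.mul (Complex.continuous_ofReal.comp (continuous_coord k))).pow _
  · apply continuous_finset_prod
    intro i _
    exact (continuous_const.mul (Complex.continuous_ofReal.comp (continuous_coord i))).pow _

lemma continuous_chiD {η : Ed d → ℝ} (hη : IsDyadicCutoff d η) (k : Fin d) (j r : ℕ) :
    Continuous (chiD η k j r) := by
  apply Continuous.mul continuous_const
  exact ((ContinuousMultilinearMap.apply ℝ (fun _ : Fin r => Ed d) ℝ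
      (fun _ => eK k)).continuous).comp
    (((zeta_smooth hη).continuous_iteratedFDeriv (m := r) (by exact_mod_cast le_top)).comp
      (continuous_const_smul (cj j)))

lemma continuous_Efun (z : Ed d) : Continuous (Efun z) := by
  apply Complex.continuous_exp.comp
  exact continuous_const.mul
    (Complex.continuous_ofReal.comp ((continuous_id.inner continuous_const)))

lemma continuous_Dfun {m ρ δ : ℝ} {N N' : ℕ} {σ : Ed d → Ed d → ℂ}
    (hσ : SymbolClass d m ρ δ N N' σ) {α β' : Fin d → ℕ} (hα : msize α ≤ N)
    (hβ' : msize β' ≤ N') (x : Ed d) : Continuous (fun ξ => hσ.D α β' x ξ) := by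
  have := hσ.continuous α β' hα hβ'
  exact this.comp (continuous_const.prodMk continuous_id)

lemma continuous_term {m ρ δ : ℝ} {N N' : ℕ} {σ : Ed d → Ed d → ℂ}
    (hσ : SymbolClass d m ρ δ N N' σ) {η : Ed d → ℝ} (hη : IsDyadicCutoff d η)
    {α : Fin d → ℕ} (β : Fin d → ℕ) (k : Fin d) (x : Ed d) {j p q r : ℕ}
    (hα : msize α ≤ N) (hq : q ≤ N') :
    Continuous (term hσ.D η α β k x j p q r) := by
  apply Continuous.mul
  · apply Continuous.mul (continuous_monomD β k p)
    exact continuous_Dfun hσ hα (by rw [msize_single]; exact hq) x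
  · exact Complex.continuous_ofReal.comp (continuous_chiD hη k j r)

lemma chiD_eq_zero_of_norm_gt {η : Ed d → ℝ} (hη : IsDyadicCutoff d η) {k : Fin d}
    {j r : ℕ} {ξ : Ed d} (h : (2:ℝ) ^ ((j:ℤ) + 1) < ‖ξ‖) : chiD η k j r ξ = 0 := by
  by_contra hne
  exact absurd (chiD_support hη hne).2 (not_le.2 h)

lemma hasCompactSupport_term {m ρ δ : ℝ} {N N' : ℕ} {σ : Ed d → Ed d → ℂ}
    (hσ : SymbolClass d m ρ δ N N' σ) {η : Ed d → ℝ} (hη : IsDyadicCutoff d η)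
    (α β : Fin d → ℕ) (k : Fin d) (x : Ed d) (j p q r : ℕ) :
    HasCompactSupport (term hσ.D η α β k x j p q r) := by
  apply HasCompactSupport.intro (isCompact_closedBall (0 : Ed d) ((2:ℝ) ^ ((j:ℤ) + 1)))
  intro ξ hξ
  rw [mem_closedBall, dist_zero_right, not_le] at hξ
  rw [term, chiD_eq_zero_of_norm_gt hη hξ]
  simp

/-- The full line derivative of an elementary term. -/
lemma term_hasLineDerivAt {m ρ δ : ℝ} {N N' : ℕ} {σ : Ed d → Ed d → ℂ}
    (hσ : SymbolClass d m ρ δ N N' σ) {η : Ed d → ℝ} (hη : IsDyadicCutoff d η)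
    {α : Fin d → ℕ} (β : Fin d → ℕ) (k : Fin d) (x : Ed d) {j p q r : ℕ}
    (hα : msize α ≤ N) (hq : q < N') (ξ : Ed d) :
    HasLineDerivAt ℝ (term hσ.D η α β k x j p q r)
      (term hσ.D η α β k x j (p+1) q r ξ + term hσ.D η α β k x j p (q+1) r ξ +
        term hσ.D η α β k x j p q (r+1) ξ) ξ (eK k) := by
  have h1 := monomD_hasDerivAt β k p ξ
  have h2 := hσ.hasDeriv_ξ α (Pi.single k q) k hα (by rw [msize_single]; exact hq) x ξ
  rw [single_add_single] at h2
  have h3 := (chiD_hasDerivAt hη k j r ξ).ofReal_comp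
  have hmul := (h1.mul h2).mul h3
  have : HasLineDerivAt ℝ (term hσ.D η α β k x j p q r)
      ((monomD β k (p+1) ξ * hσ.D α (Pi.single k q) x ξ +
        monomD β k p ξ * hσ.D α (Pi.single k (q+1)) x ξ) * ((chiD η k j r ξ : ℝ) : ℂ) +
       monomD β k p ξ * hσ.D α (Pi.single k q) x ξ * ((chiD η k j (r+1) ξ : ℝ) : ℂ))
      ξ (eK k) := by
    unfold HasLineDerivAt term
    simp only [zero_smul, add_zero] at hmul
    convert hmul using 2
    · rfl
    all_goals simp [eK]
  convert this using 1
  rw [term, term, term]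
  ring

end S4
namespace S4
open Finset MeasureTheory Metric

variable {d : ℕ}

lemma two_rpow_pos (e : ℝ) : (0:ℝ) < (2:ℝ) ^ e := Real.rpow_pos_of_pos two_pos e

lemma norm_monomD_le (β : Fin d → ℕ) (k : Fin d) (p : ℕ) {j : ℕ} {ξ : Ed d}
    (hξ : ‖ξ‖ ≤ (2:ℝ) ^ ((j:ℝ) + 1)) :
    ‖monomD β k p ξ‖ ≤ ((β k).descFactorial p : ℝ) * (2:ℝ) ^ ((msize β : ℝ)) *
      (2:ℝ) ^ ((j:ℝ) * ((msize β : ℝ) - (p:ℝ))) := by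
  classical
  by_cases hp : p ≤ β k
  swap
  · have h0 : (β k).descFactorial p = 0 := Nat.descFactorial_eq_zero_iff_lt.2 (by omega)
    rw [monomD, h0]
    simp
  · have hkle : β k ≤ msize β :=
      Finset.single_le_sum (f := fun i => β i) (fun i _ => Nat.zero_le _) (Finset.mem_univ k)
    set R := (2:ℝ) ^ ((j:ℝ) + 1) with hR
    have hR0 : (0:ℝ) < R := two_rpow_pos _
    have hnorm : ‖monomD β k p ξ‖ = ((β k).descFactorial p : ℝ) * |ξ k| ^ (β k - p) *
        ∏ i ∈ Finset.univ.erase k, |ξ i| ^ (β i) := by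
      rw [monomD]
      simp only [norm_mul, norm_prod, norm_pow, Complex.norm_I, one_pow, mul_one,
        Complex.norm_real, Real.norm_eq_abs, Complex.norm_natCast, one_mul]
    rw [hnorm]
    have hstep : ((β k).descFactorial p : ℝ) * |ξ k| ^ (β k - p) *
        ∏ i ∈ Finset.univ.erase k, |ξ i| ^ (β i) ≤
        ((β k).descFactorial p : ℝ) * R ^ (β k - p) *
        ∏ i ∈ Finset.univ.erase k, R ^ (β i) := by
      gcongr with i hi <;>
        first
          | positivity
          | exact (coord_le_norm ξ k).trans hξ
          | exact (coord_le_norm ξ i).trans hξ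
    refine hstep.trans ?_
    have hprod : (∏ i ∈ Finset.univ.erase k, R ^ (β i)) =
        R ^ (∑ i ∈ Finset.univ.erase k, β i) := by
      rw [← Finset.prod_pow_eq_pow_sum]
    rw [hprod, mul_assoc, ← pow_add, mul_assoc]
    have hn : (β k - p) + (∑ i ∈ Finset.univ.erase k, β i) = msize β - p := by
      have hsum : msize β = β k + ∑ i ∈ Finset.univ.erase k, β i :=
        (Finset.add_sum_erase _ _ (Finset.mem_univ k)).symm
      omega
    rw [hn]
    apply mul_le_mul_of_nonneg_left _ (Nat.cast_nonneg _)
    set n := msize β - p with hdefn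
    have hcast : (n:ℝ) = (msize β : ℝ) - p := by
      rw [hdefn, Nat.cast_sub (hp.trans hkle)]
    calc R ^ n = (2:ℝ) ^ (((j:ℝ) + 1) * n) := by
          rw [Real.rpow_mul (by norm_num : (0:ℝ) ≤ 2), Real.rpow_natCast]
      _ = (2:ℝ) ^ ((j:ℝ) * n) * (2:ℝ) ^ ((n:ℝ)) := by
          rw [← Real.rpow_add two_pos]; ring_nf
      _ ≤ (2:ℝ) ^ ((j:ℝ) * ((msize β : ℝ) - p)) * (2:ℝ) ^ ((msize β : ℝ)) := by
          rw [hcast]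
          apply mul_le_mul_of_nonneg_left _ (two_rpow_pos _).le
          apply Real.rpow_le_rpow_of_exponent_le one_le_two
          rw [← hcast]
          exact_mod_cast Nat.sub_le _ _
      _ = (2:ℝ) ^ ((msize β : ℝ)) * (2:ℝ) ^ ((j:ℝ) * ((msize β : ℝ) - p)) := by ring

lemma norm_le_jb (ξ : Ed d) : ‖ξ‖ ≤ jb ξ := by
  rw [jb]
  calc ‖ξ‖ = Real.sqrt (‖ξ‖^2) := (Real.sqrt_sq (norm_nonneg ξ)).symm
    _ ≤ Real.sqrt (1 + ‖ξ‖^2) := Real.sqrt_le_sqrt (by nlinarith)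

lemma jb_pos (ξ : Ed d) : 0 < jb ξ := by
  rw [jb]
  apply Real.sqrt_pos.2
  nlinarith [sq_nonneg ‖ξ‖]

lemma jb_rpow_le {j : ℕ} {ξ : Ed d}
    (h1 : (2:ℝ) ^ ((j:ℝ) - 1) ≤ ‖ξ‖) (h2 : ‖ξ‖ ≤ (2:ℝ) ^ ((j:ℝ) + 1)) (e : ℝ) :
    jb ξ ^ e ≤ (2:ℝ) ^ (2 * |e|) * (2:ℝ) ^ ((j:ℝ) * e) := by
  have hlow : (2:ℝ) ^ ((j:ℝ) - 1) ≤ jb ξ := h1.trans (norm_le_jb ξ)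
  have hup : jb ξ ≤ (2:ℝ) ^ ((j:ℝ) + 2) := by
    rw [jb]
    rw [show (2:ℝ) ^ ((j:ℝ) + 2) = Real.sqrt (((2:ℝ) ^ ((j:ℝ) + 2))^2) from
      (Real.sqrt_sq (two_rpow_pos _).le).symm]
    apply Real.sqrt_le_sqrt
    have hsq : ‖ξ‖^2 ≤ ((2:ℝ) ^ ((j:ℝ) + 1))^2 := by
      apply pow_le_pow_left₀ (norm_nonneg _) h2
    have h1le : (1:ℝ) ≤ (2:ℝ) ^ ((j:ℝ) + 1) :=
      Real.one_le_rpow one_le_two (by positivity)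
    have hrel : (2:ℝ) ^ ((j:ℝ) + 2) = 2 * (2:ℝ) ^ ((j:ℝ) + 1) := by
      rw [← Real.rpow_one_add' (by norm_num : (0:ℝ) ≤ 2)]
      · ring_nf
      · positivity
    rw [hrel]
    nlinarith [two_rpow_pos ((j:ℝ)+1)]
  rcases le_or_gt 0 e with he | he
  · calc jb ξ ^ e ≤ ((2:ℝ) ^ ((j:ℝ) + 2)) ^ e :=
          Real.rpow_le_rpow (jb_pos ξ).le hup he
      _ = (2:ℝ) ^ (((j:ℝ) + 2) * e) := by
          rw [← Real.rpow_mul (by norm_num : (0:ℝ) ≤ 2)]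
      _ = (2:ℝ) ^ (2 * e) * (2:ℝ) ^ ((j:ℝ) * e) := by
          rw [← Real.rpow_add two_pos]; ring_nf
      _ ≤ (2:ℝ) ^ (2 * |e|) * (2:ℝ) ^ ((j:ℝ) * e) := by
          apply mul_le_mul_of_nonneg_right _ (two_rpow_pos _).le
          apply Real.rpow_le_rpow_of_exponent_le one_le_two
          have := le_abs_self e
          nlinarith
  · calc jb ξ ^ e ≤ ((2:ℝ) ^ ((j:ℝ) - 1)) ^ e :=
          Real.rpow_le_rpow_of_nonpos (two_rpow_pos _) hlow he.le
      _ = (2:ℝ) ^ (((j:ℝ) - 1) * e) := by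
          rw [← Real.rpow_mul (by norm_num : (0:ℝ) ≤ 2)]
      _ = (2:ℝ) ^ (-e) * (2:ℝ) ^ ((j:ℝ) * e) := by
          rw [← Real.rpow_add two_pos]; ring_nf
      _ ≤ (2:ℝ) ^ (2 * |e|) * (2:ℝ) ^ ((j:ℝ) * e) := by
          apply mul_le_mul_of_nonneg_right _ (two_rpow_pos _).le
          apply Real.rpow_le_rpow_of_exponent_le one_le_two
          have := neg_le_abs e
          nlinarith [abs_nonneg e]

end S4
namespace S4
open Finset MeasureTheory Metric

variable {d : ℕ} {m ρ δ : ℝ} {N N' : ℕ} {σ : Ed d → Ed d → ℂ}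

lemma chiD_support' {η : Ed d → ℝ} (hη : IsDyadicCutoff d η) {k : Fin d} {j r : ℕ} {ξ : Ed d}
    (h : chiD η k j r ξ ≠ 0) :
    (2:ℝ) ^ ((j:ℝ) - 1) ≤ ‖ξ‖ ∧ ‖ξ‖ ≤ (2:ℝ) ^ ((j:ℝ) + 1) := by
  obtain ⟨h1, h2⟩ := chiD_support hη h
  constructor
  · calc (2:ℝ) ^ ((j:ℝ) - 1) = (2:ℝ) ^ (((j:ℤ) - 1 : ℤ) : ℝ) := by push_cast; ring_nf
      _ = (2:ℝ) ^ ((j:ℤ) - 1) := Real.rpow_intCast 2 _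
      _ ≤ ‖ξ‖ := h1
  · calc ‖ξ‖ ≤ (2:ℝ) ^ ((j:ℤ) + 1) := h2
      _ = (2:ℝ) ^ (((j:ℤ) + 1 : ℤ) : ℝ) := (Real.rpow_intCast 2 _).symm
      _ = (2:ℝ) ^ ((j:ℝ) + 1) := by push_cast; ring_nf

lemma chiD_bound' {η : Ed d → ℝ} (hη : IsDyadicCutoff d η) (k : Fin d) (r : ℕ) :
    ∃ B : ℝ, 0 ≤ B ∧ ∀ (j : ℕ) (ξ : Ed d),
      |chiD η k j r ξ| ≤ B * (2:ℝ) ^ ((j:ℝ) * (-(r:ℝ))) := by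
  obtain ⟨B, hB0, hB⟩ := chiD_bound hη k r
  refine ⟨B, hB0, fun j ξ => ?_⟩
  refine (hB j ξ).trans (le_of_eq ?_)
  congr 1
  rw [← zpow_natCast ((2:ℝ) ^ (-(j:ℤ))) r, ← zpow_mul]
  rw [← Real.rpow_intCast 2 (-(j:ℤ) * r)]
  congr 1
  push_cast
  ring

/-- Pointwise bound on an elementary term. -/
lemma term_bound (hσ : SymbolClass d m ρ δ N N' σ) {η : Ed d → ℝ} (hη : IsDyadicCutoff d η)
    (hρ0 : 0 < ρ) (hρ1 : ρ ≤ 1) {α : Fin d → ℕ} (β : Fin d → ℕ) (k : Fin d)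
    (hα : msize α ≤ N) (p q r : ℕ) (hq : q ≤ N') :
    ∃ C : ℝ, 0 ≤ C ∧ ∀ (j : ℕ), 1 ≤ j → ∀ (x ξ : Ed d),
      ‖term hσ.D η α β k x j p q r ξ‖ ≤
        C * (2:ℝ) ^ ((j:ℝ) * ((msize β : ℝ) + m + δ * (msize α : ℝ) -
          ρ * ((p:ℝ) + (q:ℝ) + (r:ℝ)))) := by
  obtain ⟨Cs, hCs⟩ := hσ.bound α (Pi.single k q) hα (by rw [msize_single]; exact hq)
  obtain ⟨B, hB0, hB⟩ := chiD_bound' hη k r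
  set e' : ℝ := m - ρ * q + δ * (msize α : ℝ) with he'
  set C : ℝ := (((β k).descFactorial p : ℝ) * (2:ℝ) ^ ((msize β : ℝ))) *
    ((max Cs 0) * (2:ℝ) ^ (2 * |e'|)) * B with hC
  have hC0 : 0 ≤ C := by positivity
  refine ⟨C, hC0, fun j hj x ξ => ?_⟩
  by_cases hchi : chiD η k j r ξ = 0
  · rw [term, hchi]
    simp only [Complex.ofReal_zero, mul_zero, norm_zero]
    positivity
  obtain ⟨h1, h2⟩ := chiD_support' hη hchi
  have hD : ‖hσ.D α (Pi.single k q) x ξ‖ ≤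
      (max Cs 0) * ((2:ℝ) ^ (2 * |e'|) * (2:ℝ) ^ ((j:ℝ) * e')) := by
    calc ‖hσ.D α (Pi.single k q) x ξ‖ ≤ Cs * jb ξ ^ (m - ρ * (msize (Pi.single k q) : ℝ) +
            δ * (msize α : ℝ)) := hCs x ξ
      _ = Cs * jb ξ ^ e' := by rw [msize_single]
      _ ≤ (max Cs 0) * jb ξ ^ e' := by
          apply mul_le_mul_of_nonneg_right (le_max_left _ _) (Real.rpow_nonneg (jb_pos ξ).le _)
      _ ≤ (max Cs 0) * ((2:ℝ) ^ (2 * |e'|) * (2:ℝ) ^ ((j:ℝ) * e')) := by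
          apply mul_le_mul_of_nonneg_left (jb_rpow_le h1 h2 e') (le_max_right _ _)
  have hnorm : ‖term hσ.D η α β k x j p q r ξ‖ =
      ‖monomD β k p ξ‖ * ‖hσ.D α (Pi.single k q) x ξ‖ * |chiD η k j r ξ| := by
    rw [term, norm_mul, norm_mul, Complex.norm_real, Real.norm_eq_abs]
  rw [hnorm]
  calc ‖monomD β k p ξ‖ * ‖hσ.D α (Pi.single k q) x ξ‖ * |chiD η k j r ξ| ≤
      (((β k).descFactorial p : ℝ) * (2:ℝ) ^ ((msize β : ℝ)) *
        (2:ℝ) ^ ((j:ℝ) * ((msize β : ℝ) - (p:ℝ)))) *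
      ((max Cs 0) * ((2:ℝ) ^ (2 * |e'|) * (2:ℝ) ^ ((j:ℝ) * e'))) *
      (B * (2:ℝ) ^ ((j:ℝ) * (-(r:ℝ)))) := by
        apply mul_le_mul
        apply mul_le_mul (norm_monomD_le β k p h2) hD (norm_nonneg _) (by positivity)
        · exact hB j ξ
        · exact abs_nonneg _
        · positivity
    _ = C * ((2:ℝ) ^ ((j:ℝ) * ((msize β : ℝ) - (p:ℝ))) * (2:ℝ) ^ ((j:ℝ) * e') *
        (2:ℝ) ^ ((j:ℝ) * (-(r:ℝ)))) := by rw [hC]; ring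
    _ = C * (2:ℝ) ^ ((j:ℝ) * (((msize β : ℝ) - (p:ℝ)) + e' + (-(r:ℝ)))) := by
        rw [← Real.rpow_add two_pos, ← Real.rpow_add two_pos]
        ring_nf
    _ ≤ C * (2:ℝ) ^ ((j:ℝ) * ((msize β : ℝ) + m + δ * (msize α : ℝ) -
          ρ * ((p:ℝ) + (q:ℝ) + (r:ℝ)))) := by
        apply mul_le_mul_of_nonneg_left _ hC0
        apply Real.rpow_le_rpow_of_exponent_le one_le_two
        have hj1 : (1:ℝ) ≤ (j:ℝ) := by exact_mod_cast hj
        have hp' : ρ * (p:ℝ) ≤ (p:ℝ) := by nlinarith [Nat.cast_nonneg (α := ℝ) p]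
        have hr' : ρ * (r:ℝ) ≤ (r:ℝ) := by nlinarith [Nat.cast_nonneg (α := ℝ) r]
        rw [he']
        have hcore : ((msize β : ℝ) - (p:ℝ)) + (m - ρ * q + δ * (msize α : ℝ)) + (-(r:ℝ)) ≤
            (msize β : ℝ) + m + δ * (msize α : ℝ) - ρ * ((p:ℝ) + (q:ℝ) + (r:ℝ)) := by
          nlinarith
        nlinarith [hcore, hj1, Nat.cast_nonneg (α := ℝ) j]

end S4
namespace S4
open Finset MeasureTheory Metric

variable {d : ℕ} {m ρ δ : ℝ} {N N' : ℕ} {σ : Ed d → Ed d → ℂ}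

/-- Bound on the integral of an elementary term against the exponential. -/
lemma integral_term_bound (hσ : SymbolClass d m ρ δ N N' σ) {η : Ed d → ℝ}
    (hη : IsDyadicCutoff d η) (hρ0 : 0 < ρ) (hρ1 : ρ ≤ 1) {α : Fin d → ℕ} (β : Fin d → ℕ)
    (k : Fin d) (hα : msize α ≤ N) (p q r : ℕ) (hq : q ≤ N') :
    ∃ C : ℝ, 0 ≤ C ∧ ∀ (j : ℕ), 1 ≤ j → ∀ (x z : Ed d),
      ‖∫ ξ : Ed d, term hσ.D η α β k x j p q r ξ * Efun z ξ‖ ≤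
        C * (2:ℝ) ^ ((j:ℝ) * ((d:ℝ) + (msize β : ℝ) + m + δ * (msize α : ℝ) -
          ρ * ((p:ℝ) + (q:ℝ) + (r:ℝ)))) := by
  obtain ⟨C, hC0, hCb⟩ := term_bound hσ hη hρ0 hρ1 β k hα p q r hq
  set v1 : ℝ := (volume (ball (0 : Ed d) 1)).toReal with hv1
  have hv10 : 0 ≤ v1 := ENNReal.toReal_nonneg
  refine ⟨C * (2:ℝ) ^ (d:ℝ) * v1, by positivity, fun j hj x z => ?_⟩
  set R : ℝ := (2:ℝ) ^ ((j:ℝ) + 1) with hR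
  have hR0 : (0:ℝ) < R := two_rpow_pos _
  set E : ℝ := (msize β : ℝ) + m + δ * (msize α : ℝ) - ρ * ((p:ℝ) + (q:ℝ) + (r:ℝ)) with hE
  have hsupp : ∀ ξ ∉ closedBall (0 : Ed d) R, term hσ.D η α β k x j p q r ξ * Efun z ξ = 0 := by
    intro ξ hξ
    rw [mem_closedBall, dist_zero_right, not_le] at hξ
    have hchi : chiD η k j r ξ = 0 := by
      by_contra hne
      exact absurd (chiD_support' hη hne).2 (not_le.2 hξ)
    rw [term, hchi]
    simp
  rw [← setIntegral_eq_integral_of_forall_compl_eq_zero hsupp]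
  have hmeas : AEStronglyMeasurable (fun ξ => term hσ.D η α β k x j p q r ξ * Efun z ξ)
      (volume.restrict (closedBall (0 : Ed d) R)) :=
    ((continuous_term hσ hη β k x hα hq).mul (continuous_Efun z)).aestronglyMeasurable.restrict
  have hvol : volume (closedBall (0 : Ed d) R) < ⊤ := measure_closedBall_lt_top
  have hbound : ∀ ξ ∈ closedBall (0 : Ed d) R,
      ‖term hσ.D η α β k x j p q r ξ * Efun z ξ‖ ≤ C * (2:ℝ) ^ ((j:ℝ) * E) := by
    intro ξ _
    rw [norm_mul, norm_Efun, mul_one]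
    exact hCb j hj x ξ
  refine (norm_setIntegral_le_of_norm_le_const hvol hbound).trans ?_
  have hvolval : (volume (closedBall (0 : Ed d) R)).toReal = R ^ d * v1 := by
    rw [Measure.addHaar_closedBall volume 0 hR0.le]
    rw [ENNReal.toReal_mul, ENNReal.toReal_ofReal (by positivity)]
    congr 2
    rw [finrank_euclideanSpace, Fintype.card_fin]
  rw [measureReal_def, hvolval]
  have hRd : R ^ d = (2:ℝ) ^ ((j:ℝ) * (d:ℝ)) * (2:ℝ) ^ (d:ℝ) := by
    rw [hR, ← Real.rpow_natCast ((2:ℝ) ^ ((j:ℝ) + 1)) d,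
      ← Real.rpow_mul (by norm_num : (0:ℝ) ≤ 2), ← Real.rpow_add two_pos]
    ring_nf
  rw [hRd]
  have hcomb : C * (2:ℝ) ^ ((j:ℝ) * E) * ((2:ℝ) ^ ((j:ℝ) * (d:ℝ)) * (2:ℝ) ^ (d:ℝ) * v1) =
      (C * (2:ℝ) ^ (d:ℝ) * v1) * ((2:ℝ) ^ ((j:ℝ) * E) * (2:ℝ) ^ ((j:ℝ) * (d:ℝ))) := by ring
  rw [hcomb, ← Real.rpow_add two_pos]
  apply le_of_eq
  congr 1
  rw [hE]
  ring

end S4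
namespace S4
open Finset MeasureTheory Metric

variable {d : ℕ} {m ρ δ : ℝ} {N N' : ℕ} {σ : Ed d → Ed d → ℂ}

lemma integrable_term_mul_Efun (hσ : SymbolClass d m ρ δ N N' σ) {η : Ed d → ℝ}
    (hη : IsDyadicCutoff d η) {α : Fin d → ℕ} (β : Fin d → ℕ) (k : Fin d) (x z : Ed d)
    (j p q r : ℕ) (hα : msize α ≤ N) (hq : q ≤ N') :
    Integrable (fun ξ : Ed d => term hσ.D η α β k x j p q r ξ * Efun z ξ) := by
  apply Continuous.integrable_of_hasCompactSupport
  · exact (continuous_term hσ hη β k x hα hq).mul (continuous_Efun z)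
  · exact (hasCompactSupport_term hσ hη α β k x j p q r).mul_right

/-- One integration by parts. -/
lemma ibp_step (hσ : SymbolClass d m ρ δ N N' σ) {η : Ed d → ℝ} (hη : IsDyadicCutoff d η)
    {α : Fin d → ℕ} (β : Fin d → ℕ) (k : Fin d) (x z : Ed d) (j p q r : ℕ)
    (hα : msize α ≤ N) (hq : q < N') :
    (Complex.I * ((z k : ℝ) : ℂ)) * ∫ ξ : Ed d, term hσ.D η α β k x j p q r ξ * Efun z ξ =
      -((∫ ξ : Ed d, term hσ.D η α β k x j (p+1) q r ξ * Efun z ξ) +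
        (∫ ξ : Ed d, term hσ.D η α β k x j p (q+1) r ξ * Efun z ξ) +
        (∫ ξ : Ed d, term hσ.D η α β k x j p q (r+1) ξ * Efun z ξ)) := by
  classical
  set f : Ed d → ℂ := term hσ.D η α β k x j p q r with hf
  set f' : Ed d → ℂ := fun ξ => term hσ.D η α β k x j (p+1) q r ξ +
    term hσ.D η α β k x j p (q+1) r ξ + term hσ.D η α β k x j p q (r+1) ξ with hf'
  set g : Ed d → ℂ := Efun z with hg
  set g' : Ed d → ℂ := fun ξ => Complex.I * ((z k : ℝ) : ℂ) * Efun z ξ with hg'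
  have h1 := integrable_term_mul_Efun hσ hη β k x z j (p+1) q r hα hq.le
  have h2 := integrable_term_mul_Efun hσ hη β k x z j p (q+1) r hα hq
  have h3 := integrable_term_mul_Efun hσ hη β k x z j p q (r+1) hα hq.le
  have h0 := integrable_term_mul_Efun hσ hη β k x z j p q r hα hq.le
  have hf'g : Integrable (fun ξ => f' ξ * g ξ) := by
    have := (h1.add h2).add h3
    simpa [hf', hg, add_mul, Pi.add_def] using this
  have hfg' : Integrable (fun ξ => f ξ * g' ξ) := by
    have := h0.const_mul (Complex.I * ((z k : ℝ) : ℂ))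
    simpa [hf, hg', mul_comm, mul_left_comm, mul_assoc] using this
  have hfg : Integrable (fun ξ => f ξ * g ξ) := h0
  have hlf : ∀ ξ : Ed d, HasLineDerivAt ℝ f (f' ξ) ξ (eK k) := fun ξ =>
    term_hasLineDerivAt hσ hη β k x hα hq ξ
  have hlg : ∀ ξ : Ed d, HasLineDerivAt ℝ g (g' ξ) ξ (eK k) := fun ξ =>
    Efun_hasDerivAt z ξ k
  have key := integral_bilinear_hasLineDerivAt_right_eq_neg_left_of_integrable
    (μ := (volume : Measure (Ed d))) (B := ContinuousLinearMap.mul ℝ ℂ)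
    hf'g hfg' hfg (fun ξ _ => hlf ξ) (fun ξ _ => hlg ξ)
  simp only [ContinuousLinearMap.mul_apply'] at key
  have lhs_eq : (∫ ξ : Ed d, f ξ * g' ξ) =
      (Complex.I * ((z k : ℝ) : ℂ)) * ∫ ξ : Ed d, f ξ * g ξ := by
    rw [← MeasureTheory.integral_const_mul]
    congr 1
    funext ξ
    rw [hg']
    ring
  have rhs_eq : (∫ ξ : Ed d, f' ξ * g ξ) =
      (∫ ξ : Ed d, term hσ.D η α β k x j (p+1) q r ξ * Efun z ξ) +
      (∫ ξ : Ed d, term hσ.D η α β k x j p (q+1) r ξ * Efun z ξ) +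
      (∫ ξ : Ed d, term hσ.D η α β k x j p q (r+1) ξ * Efun z ξ) := by
    have h12 : Integrable (fun ξ : Ed d => term hσ.D η α β k x j (p+1) q r ξ * Efun z ξ +
        term hσ.D η α β k x j p (q+1) r ξ * Efun z ξ) := h1.add h2
    rw [← integral_add h1 h2, ← integral_add h12 h3]
    congr 1
    funext ξ
    rw [hf']
    ring
  rw [lhs_eq, rhs_eq] at key
  exact key
end S4
namespace S4
open Finset MeasureTheory Metric

variable {d : ℕ} {m ρ δ : ℝ} {N N' : ℕ} {σ : Ed d → Ed d → ℂ}

/-- Iterated integration by parts bound. -/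
lemma key_q (hσ : SymbolClass d m ρ δ N N' σ) {η : Ed d → ℝ} (hη : IsDyadicCutoff d η)
    (hρ0 : 0 < ρ) (hρ1 : ρ ≤ 1) {α : Fin d → ℕ} (β : Fin d → ℕ) (k : Fin d)
    (hα : msize α ≤ N) (M : ℕ) (hM : M ≤ N') :
    ∃ C : ℝ, 0 ≤ C ∧ ∀ (n p q r : ℕ), n + p + q + r ≤ M → ∀ (j : ℕ), 1 ≤ j →
      ∀ (x z : Ed d),
      ‖(Complex.I * ((z k : ℝ) : ℂ)) ^ n *
          ∫ ξ : Ed d, term hσ.D η α β k x j p q r ξ * Efun z ξ‖ ≤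
        C * 3 ^ n * (2:ℝ) ^ ((j:ℝ) * ((d:ℝ) + (msize β : ℝ) + m + δ * (msize α : ℝ) -
          ρ * ((n + p + q + r : ℕ) : ℝ))) := by
  classical
  have hex : ∀ t : ℕ × ℕ × ℕ, ∃ C : ℝ, 0 ≤ C ∧ (t.2.1 ≤ N' → ∀ (j : ℕ), 1 ≤ j →
      ∀ (x z : Ed d), ‖∫ ξ : Ed d, term hσ.D η α β k x j t.1 t.2.1 t.2.2 ξ * Efun z ξ‖ ≤
        C * (2:ℝ) ^ ((j:ℝ) * ((d:ℝ) + (msize β : ℝ) + m + δ * (msize α : ℝ) -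
          ρ * (((t.1 : ℝ)) + (t.2.1 : ℝ) + (t.2.2 : ℝ))))) := by
    intro t
    by_cases h : t.2.1 ≤ N'
    · obtain ⟨C, hC0, hC⟩ := integral_term_bound hσ hη hρ0 hρ1 β k hα t.1 t.2.1 t.2.2 h
      exact ⟨C, hC0, fun _ => hC⟩
    · exact ⟨0, le_rfl, fun h' => absurd h' h⟩
  choose Cf hCf0 hCf using hex
  set S : Finset (ℕ × ℕ × ℕ) :=
    (range (M+1)) ×ˢ ((range (M+1)) ×ˢ (range (M+1))) with hS
  set C : ℝ := ∑ t ∈ S, Cf t with hCdef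
  have hC0 : 0 ≤ C := Finset.sum_nonneg (fun t _ => hCf0 t)
  have hCle : ∀ t ∈ S, Cf t ≤ C := fun t ht =>
    Finset.single_le_sum (fun t' _ => hCf0 t') ht
  refine ⟨C, hC0, ?_⟩
  intro n
  induction n with
  | zero =>
    intro p q r hle j hj x z
    have hq : q ≤ N' := le_trans (by omega) hM
    have hmem : (p, q, r) ∈ S := by
      rw [hS]
      simp only [Finset.mem_product, Finset.mem_range]
      omega
    rw [pow_zero, one_mul]
    calc ‖∫ ξ : Ed d, term hσ.D η α β k x j p q r ξ * Efun z ξ‖ ≤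
        Cf (p, q, r) * (2:ℝ) ^ ((j:ℝ) * ((d:ℝ) + (msize β : ℝ) + m + δ * (msize α : ℝ) -
          ρ * ((p : ℝ) + (q : ℝ) + (r : ℝ)))) := hCf (p, q, r) hq j hj x z
      _ ≤ C * 3 ^ 0 * (2:ℝ) ^ ((j:ℝ) * ((d:ℝ) + (msize β : ℝ) + m + δ * (msize α : ℝ) -
          ρ * ((0 + p + q + r : ℕ) : ℝ))) := by
          rw [pow_zero, mul_one]
          have hexp : ((p : ℝ) + (q : ℝ) + (r : ℝ)) = ((0 + p + q + r : ℕ) : ℝ) := by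
            push_cast; ring
          rw [hexp]
          exact mul_le_mul_of_nonneg_right (hCle _ hmem) (two_rpow_pos _).le
  | succ n ih =>
    intro p q r hle j hj x z
    have hq : q < N' := by omega
    have hibp := ibp_step hσ hη β k x z j p q r hα hq
    have hsplit : (Complex.I * ((z k : ℝ) : ℂ)) ^ (n+1) *
        ∫ ξ : Ed d, term hσ.D η α β k x j p q r ξ * Efun z ξ =
        -((Complex.I * ((z k : ℝ) : ℂ)) ^ n *
            (∫ ξ : Ed d, term hσ.D η α β k x j (p+1) q r ξ * Efun z ξ) +
          (Complex.I * ((z k : ℝ) : ℂ)) ^ n *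
            (∫ ξ : Ed d, term hσ.D η α β k x j p (q+1) r ξ * Efun z ξ) +
          (Complex.I * ((z k : ℝ) : ℂ)) ^ n *
            (∫ ξ : Ed d, term hσ.D η α β k x j p q (r+1) ξ * Efun z ξ)) := by
      rw [pow_succ, mul_assoc, hibp]
      ring
    rw [hsplit, norm_neg]
    set X : ℝ := (2:ℝ) ^ ((j:ℝ) * ((d:ℝ) + (msize β : ℝ) + m + δ * (msize α : ℝ) -
      ρ * (((n+1) + p + q + r : ℕ) : ℝ))) with hX
    have hb1 := ih (p+1) q r (by omega) j hj x z
    have hb2 := ih p (q+1) r (by omega) j hj x z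
    have hb3 := ih p q (r+1) (by omega) j hj x z
    have he1 : (n + (p+1) + q + r : ℕ) = ((n+1) + p + q + r : ℕ) := by omega
    have he2 : (n + p + (q+1) + r : ℕ) = ((n+1) + p + q + r : ℕ) := by omega
    have he3 : (n + p + q + (r+1) : ℕ) = ((n+1) + p + q + r : ℕ) := by omega
    rw [he1] at hb1
    rw [he2] at hb2
    rw [he3] at hb3
    calc ‖(Complex.I * ((z k : ℝ) : ℂ)) ^ n *
            (∫ ξ : Ed d, term hσ.D η α β k x j (p+1) q r ξ * Efun z ξ) +
          (Complex.I * ((z k : ℝ) : ℂ)) ^ n *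
            (∫ ξ : Ed d, term hσ.D η α β k x j p (q+1) r ξ * Efun z ξ) +
          (Complex.I * ((z k : ℝ) : ℂ)) ^ n *
            (∫ ξ : Ed d, term hσ.D η α β k x j p q (r+1) ξ * Efun z ξ)‖ ≤
        C * 3 ^ n * X + C * 3 ^ n * X + C * 3 ^ n * X := by
          refine (norm_add_le _ _).trans ?_
          refine add_le_add ((norm_add_le _ _).trans (add_le_add ?_ ?_)) ?_
          · exact hb1
          · exact hb2
          · exact hb3
      _ = C * 3 ^ (n+1) * X := by ring
  end S4
namespace S4
open Finset MeasureTheory Metric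

variable {d : ℕ} {m ρ δ : ℝ} {N N' : ℕ} {σ : Ed d → Ed d → ℂ}

lemma term_zero {η : Ed d → ℝ} (D : (Fin d → ℕ) → (Fin d → ℕ) → Ed d → Ed d → ℂ)
    (α β : Fin d → ℕ) (k : Fin d) (x : Ed d) {j : ℕ} (hj : 1 ≤ j) (ξ : Ed d) :
    term D η α β k x j 0 0 0 ξ =
      (∏ i, (Complex.I * ((ξ i : ℝ) : ℂ)) ^ (β i)) * D α 0 x ξ *
        ((cutoff η j ξ : ℝ) : ℂ) := by
  classical
  rw [term]
  congr 1
  · congr 1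
    · rw [monomD, Nat.descFactorial_zero, pow_zero, Nat.sub_zero]
      rw [Nat.cast_one, one_mul, one_mul]
      exact Finset.mul_prod_erase Finset.univ
        (fun i => (Complex.I * ((ξ i : ℝ) : ℂ)) ^ (β i)) (Finset.mem_univ k)
    · rw [Pi.single_zero]
  · congr 1
    rw [chiD, pow_zero, one_mul, iteratedFDeriv_zero_apply, zeta, cutoff,
      if_neg (by omega : ¬ j = 0)]
    congr 2
    rw [smul_smul, cj]
    congr 1
    rw [zpow_add₀ (two_ne_zero (α := ℝ)), zpow_one]
    ring

lemma norm_Kj_le (hd : 1 ≤ d) (hσ : SymbolClass d m ρ δ N N' σ) {η : Ed d → ℝ}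
    (hη : IsDyadicCutoff d η) (hρ0 : 0 < ρ) (hρ1 : ρ ≤ 1) {α : Fin d → ℕ} (β : Fin d → ℕ)
    (hα : msize α ≤ N) (M : ℕ) (hM : M ≤ N') :
    ∃ C : ℝ, 0 ≤ C ∧ ∀ (j : ℕ), 1 ≤ j → ∀ (x z : Ed d), z ≠ 0 →
      ‖Kj hσ.D η j α β x z‖ ≤
        C * (2:ℝ) ^ ((j:ℝ) * ((d:ℝ) + (msize β : ℝ) + m + δ * (msize α : ℝ) - ρ * (M:ℝ))) *
          ‖z‖ ^ (-(M:ℝ)) := by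
  classical
  have hEd : Nonempty (Fin d) := ⟨⟨0, hd⟩⟩
  choose Cf hCf0 hCf using fun k : Fin d => key_q hσ hη hρ0 hρ1 β k hα M hM
  set C0 : ℝ := ∑ k, Cf k with hC0def
  have hC00 : 0 ≤ C0 := Finset.sum_nonneg fun k _ => hCf0 k
  set s : ℝ := (2 * Real.pi) ^ (-(d : ℤ)) with hs
  have hs0 : 0 < s := zpow_pos (by positivity) _
  refine ⟨s * C0 * 3 ^ M * (Real.sqrt d) ^ M, by positivity, ?_⟩
  intro j hj x z hz
  -- pick the maximal coordinate
  obtain ⟨k, -, hk⟩ := Finset.exists_max_image (Finset.univ : Finset (Fin d))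
    (fun i => |z i|) Finset.univ_nonempty
  have hzk : 0 < |z k| := by
    rcases lt_or_eq_of_le (abs_nonneg (z k)) with h | h
    · exact h
    · exfalso
      apply hz
      ext i
      have := hk i (Finset.mem_univ i)
      rw [← h] at this
      have : |z i| = 0 := le_antisymm this (abs_nonneg _)
      simpa using this
  have hz0 : 0 < ‖z‖ := norm_pos_iff.2 hz
  have hnz : ‖z‖ ≤ Real.sqrt d * |z k| := by
    rw [EuclideanSpace.norm_eq]
    have hsum : ∑ i, ‖z i‖ ^ 2 ≤ (d : ℝ) * |z k| ^ 2 := by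
      calc ∑ i, ‖z i‖ ^ 2 ≤ ∑ _i : Fin d, |z k| ^ 2 := by
            apply Finset.sum_le_sum
            intro i _
            rw [Real.norm_eq_abs]
            exact pow_le_pow_left₀ (abs_nonneg _) (hk i (Finset.mem_univ i)) 2
        _ = (d : ℝ) * |z k| ^ 2 := by
            rw [Finset.sum_const, Finset.card_univ, Fintype.card_fin, nsmul_eq_mul]
    calc Real.sqrt (∑ i, ‖z i‖ ^ 2) ≤ Real.sqrt ((d : ℝ) * |z k| ^ 2) :=
          Real.sqrt_le_sqrt hsum
      _ = Real.sqrt d * |z k| := by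
          rw [Real.sqrt_mul (Nat.cast_nonneg d), Real.sqrt_sq_eq_abs, _root_.abs_abs]
  -- rewrite Kj via the elementary term
  have hKj : Kj hσ.D η j α β x z =
      s • ∫ ξ : Ed d, term hσ.D η α β k x j 0 0 0 ξ * Efun z ξ := by
    rw [Kj, hs]
    congr 1
    apply integral_congr_ae
    filter_upwards with ξ
    rw [term_zero hσ.D α β k x hj ξ, Efun]
  have hkeyq := hCf k (M) 0 0 0 (by omega) j hj x z
  have hMsum : (M + 0 + 0 + 0 : ℕ) = M := by omega
  rw [hMsum] at hkeyq
  have hnormpow : ‖(Complex.I * ((z k : ℝ) : ℂ)) ^ M *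
      ∫ ξ : Ed d, term hσ.D η α β k x j 0 0 0 ξ * Efun z ξ‖ =
      |z k| ^ M * ‖∫ ξ : Ed d, term hσ.D η α β k x j 0 0 0 ξ * Efun z ξ‖ := by
    rw [norm_mul, norm_pow, norm_mul, Complex.norm_I, one_mul, Complex.norm_real,
      Real.norm_eq_abs]
  rw [hnormpow] at hkeyq
  set I0 : ℝ := ‖∫ ξ : Ed d, term hσ.D η α β k x j 0 0 0 ξ * Efun z ξ‖ with hI0
  set X : ℝ := (2:ℝ) ^ ((j:ℝ) * ((d:ℝ) + (msize β : ℝ) + m + δ * (msize α : ℝ) - ρ * (M:ℝ)))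
    with hXdef
  have hXeq : (2:ℝ) ^ ((j:ℝ) * ((d:ℝ) + (msize β : ℝ) + m + δ * (msize α : ℝ) -
      ρ * ((M:ℕ):ℝ))) = X := rfl
  have hkeyq' : |z k| ^ M * I0 ≤ Cf k * 3 ^ M * X := by
    rw [← hXeq]
    exact hkeyq
  have hApos : (0:ℝ) < |z k| ^ M := pow_pos hzk M
  have hI0le : I0 ≤ Cf k * 3 ^ M * X * (|z k| ^ M)⁻¹ := by
    rw [mul_comm] at hkeyq'
    rw [← le_div_iff₀ hApos, div_eq_mul_inv] at hkeyq'
    exact hkeyq'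
  have hinvle : (|z k| ^ M)⁻¹ ≤ (Real.sqrt d) ^ M * (‖z‖ ^ M)⁻¹ := by
    rw [← inv_pow, ← inv_pow, ← mul_pow]
    apply pow_le_pow_left₀ (inv_nonneg.2 hzk.le)
    have h2 : ‖z‖ * ‖z‖⁻¹ = 1 := mul_inv_cancel₀ hz0.ne'
    have h3 := mul_le_mul_of_nonneg_right hnz (inv_nonneg.2 hz0.le)
    rw [inv_eq_one_div, div_le_iff₀ hzk]
    nlinarith [h2, h3]
  have hrpow : (‖z‖ ^ M)⁻¹ = ‖z‖ ^ (-(M:ℝ)) := by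
    rw [Real.rpow_neg (norm_nonneg z), Real.rpow_natCast]
  have hX0 : 0 ≤ X := by rw [hXdef]; exact (two_rpow_pos _).le
  have hfinal : ‖Kj hσ.D η j α β x z‖ = s * I0 := by
    rw [hKj, norm_smul, Real.norm_eq_abs, abs_of_pos hs0]
  rw [hfinal]
  calc s * I0 ≤ s * (Cf k * 3 ^ M * X * (|z k| ^ M)⁻¹) :=
        mul_le_mul_of_nonneg_left hI0le hs0.le
    _ ≤ s * (Cf k * 3 ^ M * X * ((Real.sqrt d) ^ M * (‖z‖ ^ M)⁻¹)) := by
        apply mul_le_mul_of_nonneg_left _ hs0.le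
        apply mul_le_mul_of_nonneg_left hinvle
        exact mul_nonneg (mul_nonneg (hCf0 k) (by positivity)) hX0
    _ ≤ s * (C0 * 3 ^ M * X * ((Real.sqrt d) ^ M * (‖z‖ ^ M)⁻¹)) := by
        have hCfle : Cf k ≤ C0 :=
          Finset.single_le_sum (fun k' _ => hCf0 k') (Finset.mem_univ k)
        apply mul_le_mul_of_nonneg_left _ hs0.le
        have h1 : (0:ℝ) ≤ 3 ^ M * X * ((Real.sqrt d) ^ M * (‖z‖ ^ M)⁻¹) :=
          mul_nonneg (mul_nonneg (by positivity) hX0) (by positivity)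
        nlinarith [hCfle, h1]
    _ = s * C0 * 3 ^ M * (Real.sqrt d) ^ M * X * ‖z‖ ^ (-(M:ℝ)) := by
        rw [← hrpow]; ring
end S4
/-- with `a = d+m+δ|α|+|β|`, for `M ∈ ℕ₀` with `M ≤ N'` and `ρM > a`:
`Σ_{2^j > |z|⁻¹} |K_{j,α,β}(x,z)| ≤ C_{α,β,M} |z|^{-a-(1-ρ)M}` for `0 < |z| ≤ 1`. -/
theorem statement4 {d : ℕ} (hd : 1 ≤ d) {m ρ δ : ℝ} {N N' : ℕ} {σ : Ed d → Ed d → ℂ}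
    (hρ0 : 0 < ρ) (hρ1 : ρ ≤ 1) (hδ0 : 0 ≤ δ) (hδ1 : δ < 1)
    (hσ : SymbolClass d m ρ δ N N' σ)
    {η : Ed d → ℝ} (hη : IsDyadicCutoff d η)
    (α β : Fin d → ℕ) (hα : msize α ≤ N)
    (a : ℝ) (ha : a = (d : ℝ) + m + δ * (msize α : ℝ) + (msize β : ℝ))
    (M : ℕ) (hM : M ≤ N') (hρM : a < ρ * (M : ℝ)) :
    ∃ C : ℝ, ∀ (x z : Ed d), z ≠ 0 → ‖z‖ ≤ 1 →
      Summable (fun j : ℕ => if ‖z‖⁻¹ < (2 : ℝ) ^ j then ‖Kj hσ.D η j α β x z‖ else 0) ∧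
      (∑' j : ℕ, if ‖z‖⁻¹ < (2 : ℝ) ^ j then ‖Kj hσ.D η j α β x z‖ else 0) ≤
        C * ‖z‖ ^ (-(a + (1 - ρ) * (M : ℝ))) := by
  classical
  obtain ⟨CK, hCK0, hCK⟩ := S4.norm_Kj_le hd hσ hη hρ0 hρ1 β hα M hM
  have haexp : (d:ℝ) + (msize β : ℝ) + m + δ * (msize α : ℝ) - ρ * (M:ℝ) = a - ρ * (M:ℝ) := by
    rw [ha]; ring
  set t : ℝ := a - ρ * (M:ℝ) with ht
  have ht0 : t < 0 := by rw [ht]; linarith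
  set R : ℝ := (2:ℝ) ^ t with hR
  have hR0 : (0:ℝ) < R := S4.two_rpow_pos t
  have hR1 : R < 1 := Real.rpow_lt_one_of_one_lt_of_neg one_lt_two ht0
  refine ⟨CK * (1 - R)⁻¹, ?_⟩
  intro x z hz hz1
  have hz0 : (0:ℝ) < ‖z‖ := norm_pos_iff.2 hz
  set f : ℕ → ℝ := fun j => if ‖z‖⁻¹ < (2:ℝ) ^ j then ‖Kj hσ.D η j α β x z‖ else 0 with hf
  have hf0 : ∀ j, 0 ≤ f j := by
    intro j
    rw [hf]
    dsimp only
    split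
    · exact norm_nonneg _
    · exact le_rfl
  have hfb : ∀ j : ℕ, f j ≤ (CK * ‖z‖ ^ (-(M:ℝ))) * R ^ j := by
    intro j
    rw [hf]
    dsimp only
    by_cases hcond : ‖z‖⁻¹ < (2:ℝ) ^ j
    · rw [if_pos hcond]
      have hj1 : 1 ≤ j := by
        by_contra h
        have hj0 : j = 0 := by omega
        subst hj0
        rw [pow_zero] at hcond
        have hvv : ‖z‖ * ‖z‖⁻¹ = 1 := mul_inv_cancel₀ hz0.ne'
        nlinarith [inv_pos.2 hz0]
      have hKb := hCK j hj1 x z hz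
      rw [haexp] at hKb
      have h2 : (2:ℝ) ^ ((j:ℝ) * t) = R ^ j := by
        rw [mul_comm, Real.rpow_mul (by norm_num : (0:ℝ) ≤ 2), ← hR, Real.rpow_natCast]
      rw [h2] at hKb
      calc ‖Kj hσ.D η j α β x z‖ ≤ CK * R ^ j * ‖z‖ ^ (-(M:ℝ)) := hKb
        _ = (CK * ‖z‖ ^ (-(M:ℝ))) * R ^ j := by ring
    · rw [if_neg hcond]
      positivity
  have hgsum : Summable (fun j : ℕ => (CK * ‖z‖ ^ (-(M:ℝ))) * R ^ j) :=
    (summable_geometric_of_lt_one hR0.le hR1).mul_left _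
  have hsum : Summable f := Summable.of_nonneg_of_le hf0 hfb hgsum
  refine ⟨hsum, ?_⟩
  have hex : ∃ j : ℕ, ‖z‖⁻¹ < (2:ℝ) ^ j := pow_unbounded_of_one_lt (‖z‖⁻¹) one_lt_two
  set j₀ : ℕ := Nat.find hex with hj₀def
  have hj₀spec : ‖z‖⁻¹ < (2:ℝ) ^ j₀ := Nat.find_spec hex
  have hzero : ∀ i < j₀, f i = 0 := by
    intro i hi
    rw [hf]
    dsimp only
    rw [if_neg (Nat.find_min hex hi)]
  have hdecomp := Summable.sum_add_tsum_nat_add j₀ hsum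
  have hsum0 : ∑ i ∈ Finset.range j₀, f i = 0 :=
    Finset.sum_eq_zero (fun i hi => hzero i (Finset.mem_range.1 hi))
  have hshift : Summable (fun i : ℕ => f (i + j₀)) := (summable_nat_add_iff j₀).2 hsum
  have htail : (∑' i : ℕ, f (i + j₀)) ≤ (CK * ‖z‖ ^ (-(M:ℝ)) * R ^ j₀) * (1 - R)⁻¹ := by
    have hle : ∀ i : ℕ, f (i + j₀) ≤ (CK * ‖z‖ ^ (-(M:ℝ)) * R ^ j₀) * R ^ i := by
      intro i
      refine (hfb (i + j₀)).trans (le_of_eq ?_)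
      rw [pow_add]
      ring
    have hsumg : Summable (fun i : ℕ => (CK * ‖z‖ ^ (-(M:ℝ)) * R ^ j₀) * R ^ i) :=
      (summable_geometric_of_lt_one hR0.le hR1).mul_left _
    calc (∑' i : ℕ, f (i + j₀)) ≤ ∑' i : ℕ, (CK * ‖z‖ ^ (-(M:ℝ)) * R ^ j₀) * R ^ i :=
          Summable.tsum_le_tsum hle hshift hsumg
      _ = (CK * ‖z‖ ^ (-(M:ℝ)) * R ^ j₀) * (1 - R)⁻¹ := by
          rw [tsum_mul_left, tsum_geometric_of_lt_one hR0.le hR1]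
  have hRj₀ : R ^ j₀ ≤ ‖z‖ ^ (-t) := by
    have h1 : R ^ j₀ = ((2:ℝ) ^ (j₀ : ℕ) : ℝ) ^ t := by
      rw [← Real.rpow_natCast ((2:ℝ)) j₀, ← Real.rpow_natCast R j₀, hR,
        ← Real.rpow_mul (by norm_num : (0:ℝ) ≤ 2), ← Real.rpow_mul (by norm_num : (0:ℝ) ≤ 2)]
      ring_nf
    rw [h1]
    calc ((2:ℝ) ^ (j₀ : ℕ) : ℝ) ^ t ≤ (‖z‖⁻¹) ^ t :=
          Real.rpow_le_rpow_of_nonpos (inv_pos.2 hz0) hj₀spec.le ht0.le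
      _ = ‖z‖ ^ (-t) := by
          rw [← Real.rpow_neg_one ‖z‖, ← Real.rpow_mul hz0.le]
          ring_nf
  have hfinal : (∑' j : ℕ, f j) ≤ CK * (1 - R)⁻¹ * ‖z‖ ^ (-(a + (1-ρ) * (M:ℝ))) := by
    have h0 : (∑' j : ℕ, f j) = ∑' i : ℕ, f (i + j₀) := by
      rw [← hdecomp, hsum0, zero_add]
    rw [h0]
    refine htail.trans ?_
    have hmono : CK * ‖z‖ ^ (-(M:ℝ)) * R ^ j₀ ≤ CK * ‖z‖ ^ (-(M:ℝ)) * ‖z‖ ^ (-t) := by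
      apply mul_le_mul_of_nonneg_left hRj₀
      positivity
    have hcollect : CK * ‖z‖ ^ (-(M:ℝ)) * ‖z‖ ^ (-t) =
        CK * ‖z‖ ^ (-(a + (1-ρ) * (M:ℝ))) := by
      rw [mul_assoc, ← Real.rpow_add hz0]
      congr 2
      rw [ht]
      ring
    have hinv0 : (0:ℝ) ≤ (1 - R)⁻¹ := inv_nonneg.2 (by linarith)
    calc CK * ‖z‖ ^ (-(M:ℝ)) * R ^ j₀ * (1 - R)⁻¹ ≤
        CK * ‖z‖ ^ (-(M:ℝ)) * ‖z‖ ^ (-t) * (1 - R)⁻¹ :=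
          mul_le_mul_of_nonneg_right hmono hinv0
      _ = CK * (1 - R)⁻¹ * ‖z‖ ^ (-(a + (1-ρ) * (M:ℝ))) := by
          rw [hcollect]; ring
  exact hfinal
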